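/- Let ρ, σ, τ be density matrices on ℂ^n. Then |F(ρ,σ) − F(τ,σ)| ≤ √2 · √(1 − F(τ,ρ)). -/

import Mathlib

open Matrix Filter
open scoped Kronecker ComplexOrder

noncomputable section

/-- The positive semidefinite square root of a matrix, extended by `0` to all matrices. -/
noncomputable def msqrt {n : Type*} [Fintype n] [DecidableEq n] (A : Matrix n n ℂ) :
    Matrix n n ℂ :=
  open scoped Classical in
  if h : A.PosSemidef then
    (h.1.eigenvectorUnitary : Matrix n n ℂ) *
      diagonal ((↑) ∘ (√·) ∘ h.1.eigenvalues) *
      (star h.1.eigenvectorUnitary : Matrix n n ℂ)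
  else 0

/-- A density matrix: positive semidefinite with trace one. -/
def IsDensityMatrix {n : Type*} [Fintype n] [DecidableEq n] (ρ : Matrix n n ℂ) : Prop :=
  ρ.PosSemidef ∧ ρ.trace = 1

/-- The fidelity `F(ρ,σ) = Tr √(√ρ σ √ρ)` of two (density) matrices. -/
noncomputable def Fid {n : Type*} [Fintype n] [DecidableEq n] (ρ σ : Matrix n n ℂ) : ℝ :=
  ((msqrt (msqrt ρ * σ * msqrt ρ)).trace).re

/-- The trace distance `Δ(ρ,σ) = (1/2) Tr √((ρ-σ)† (ρ-σ))`. -/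
noncomputable def trDist {n : Type*} [Fintype n] [DecidableEq n] (ρ σ : Matrix n n ℂ) : ℝ :=
  (1 / 2) * ((msqrt ((ρ - σ)ᴴ * (ρ - σ))).trace).re

/-- A quantum channel: a linear map admitting a Kraus representation. -/
def IsQuantumChannel {m n : Type*} [Fintype m] [Fintype n] [DecidableEq m] [DecidableEq n]
    (Λ : Matrix m m ℂ →ₗ[ℂ] Matrix n n ℂ) : Prop :=
  ∃ (N : ℕ) (K : Fin N → Matrix n m ℂ),
    (∀ X, Λ X = ∑ i, K i * X * (K i)ᴴ) ∧ (∑ i, (K i)ᴴ * K i = 1)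

/-- The permutation matrix `P_π` on `(ℂ^d)^{⊗k}`. -/
def permMat (d k : ℕ) (π : Equiv.Perm (Fin k)) :
    Matrix (Fin k → Fin d) (Fin k → Fin d) ℂ :=
  Matrix.of fun f g => if f = g ∘ π then 1 else 0

/-- The orthogonal projector `Π⁺_k` onto the symmetric subspace of `(ℂ^d)^{⊗k}`. -/
noncomputable def symProj (d k : ℕ) : Matrix (Fin k → Fin d) (Fin k → Fin d) ℂ :=
  ((k.factorial : ℂ))⁻¹ • ∑ π : Equiv.Perm (Fin k), permMat d k π

/-- Combine a value for the first tensor factor with values for the remaining factors. -/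
def extendFirst {d k : ℕ} (a : Fin d) (h : {i : Fin k // (i : ℕ) ≠ 0} → Fin d) :
    Fin k → Fin d :=
  fun i => if hi : (i : ℕ) = 0 then a else h ⟨i, hi⟩

/-- The partial trace over the tensor factors `2,…,k` of a matrix on `(ℂ^d)^{⊗k}`. -/
noncomputable def ptrRest {d k : ℕ}
    (W : Matrix (Fin k → Fin d) (Fin k → Fin d) ℂ) : Matrix (Fin d) (Fin d) ℂ :=
  Matrix.of fun a a' =>
    ∑ h : {i : Fin k // (i : ℕ) ≠ 0} → Fin d, W (extendFirst a h) (extendFirst a' h)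

/-- A `k`-Bose-symmetric extendible channel on `d×d` matrices. -/
def IsBoseSymExtendible (d k : ℕ)
    (Λ : Matrix (Fin d) (Fin d) ℂ →ₗ[ℂ] Matrix (Fin d) (Fin d) ℂ) : Prop :=
  ∃ V : Matrix (Fin d) (Fin d) ℂ →ₗ[ℂ] Matrix (Fin k → Fin d) (Fin k → Fin d) ℂ,
    IsQuantumChannel V ∧ (∀ X, symProj d k * V X * symProj d k = V X) ∧
    (∀ X, Λ X = ptrRest (V X))

/-- An entanglement-breaking (measure-and-prepare) channel on `d×d` matrices. -/
def IsEBChannel (d : ℕ)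
    (Λ : Matrix (Fin d) (Fin d) ℂ →ₗ[ℂ] Matrix (Fin d) (Fin d) ℂ) : Prop :=
  ∃ (N : ℕ) (M : Fin N → Matrix (Fin d) (Fin d) ℂ) (β : Fin N → (Fin d → ℂ)),
    (∀ y, (M y).PosSemidef) ∧ (∑ y, M y = 1) ∧ (∀ y, star (β y) ⬝ᵥ β y = 1) ∧
    (∀ X, Λ X = ∑ y, ((M y * X).trace) • vecMulVec (β y) (star (β y)))

/-- `(id_A ⊗ Λ)[ρ]`: a map acting on the `B` tensor factor of a bipartite matrix. -/
noncomputable def idTensor {dA dB dB' : ℕ}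
    (Λ : Matrix (Fin dB) (Fin dB) ℂ →ₗ[ℂ] Matrix (Fin dB') (Fin dB') ℂ)
    (ρ : Matrix (Fin dA × Fin dB) (Fin dA × Fin dB) ℂ) :
    Matrix (Fin dA × Fin dB') (Fin dA × Fin dB') ℂ :=
  Matrix.of fun p q => Λ (Matrix.of fun b b' => ρ (p.1, b) (q.1, b')) p.2 q.2

/-- `(Γ ⊗ id_B)[ρ]`: a map acting on the `A` tensor factor of a bipartite matrix. -/
noncomputable def tensorId {dA dA' dB : ℕ}
    (Γ : Matrix (Fin dA) (Fin dA) ℂ →ₗ[ℂ] Matrix (Fin dA') (Fin dA') ℂ)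
    (ρ : Matrix (Fin dA × Fin dB) (Fin dA × Fin dB) ℂ) :
    Matrix (Fin dA' × Fin dB) (Fin dA' × Fin dB) ℂ :=
  Matrix.of fun p q => Γ (Matrix.of fun a a' => ρ (a, p.2) (a', q.2)) p.1 q.1

/-- Supremum of `F(ρ, (id ⊗ Λ)[ρ])` over `k`-Bose-symmetric extendible channels `Λ`. -/
noncomputable def symSup (dA dB k : ℕ)
    (ρ : Matrix (Fin dA × Fin dB) (Fin dA × Fin dB) ℂ) : ℝ :=
  sSup {x : ℝ | ∃ Λ, IsBoseSymExtendible dB k Λ ∧ x = Fid ρ (idTensor Λ ρ)}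

/-- Supremum of `F(ρ, (id ⊗ Λ)[ρ])` over entanglement-breaking channels `Λ`. -/
noncomputable def ebSup (dA dB : ℕ)
    (ρ : Matrix (Fin dA × Fin dB) (Fin dA × Fin dB) ℂ) : ℝ :=
  sSup {x : ℝ | ∃ Λ, IsEBChannel dB Λ ∧ x = Fid ρ (idTensor Λ ρ)}

/-- A quantum-classical bipartite state. -/
def IsQuantumClassical {dA dB : ℕ}
    (ρ : Matrix (Fin dA × Fin dB) (Fin dA × Fin dB) ℂ) : Prop :=
  ∃ (N : ℕ) (p : Fin N → ℝ) (σ : Fin N → Matrix (Fin dA) (Fin dA) ℂ)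
    (b : Fin N → (Fin dB → ℂ)),
    (∀ i, 0 ≤ p i) ∧ (∑ i, p i = 1) ∧ (∀ i, IsDensityMatrix (σ i)) ∧
    (∀ i j, star (b i) ⬝ᵥ b j = if i = j then 1 else 0) ∧
    ρ = ∑ i, (p i : ℂ) • (σ i ⊗ₖ vecMulVec (b i) (star (b i)))

/-- The Choi matrix `J(Λ) = ∑_{x,x'} |x⟩⟨x'| ⊗ Λ(|x⟩⟨x'|)`. -/
noncomputable def choiMatrix {d : ℕ} {Y : Type*} [Fintype Y] [DecidableEq Y]
    (Λ : Matrix (Fin d) (Fin d) ℂ →ₗ[ℂ] Matrix Y Y ℂ) :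
    Matrix (Fin d × Y) (Fin d × Y) ℂ :=
  Matrix.of fun p q => Λ (Matrix.single p.1 q.1 1) p.2 q.2

/-- A `k`-Bose-symmetric extension (on the output system) of a matrix on `ℂ^d ⊗ ℂ^d`. -/
def HasBoseSymExtension {d : ℕ} (k : ℕ)
    (W : Matrix (Fin d × Fin d) (Fin d × Fin d) ℂ) : Prop :=
  ∃ Wt : Matrix (Fin d × (Fin k → Fin d)) (Fin d × (Fin k → Fin d)) ℂ,
    Wt.PosSemidef ∧
    ((1 : Matrix (Fin d) (Fin d) ℂ) ⊗ₖ symProj d k) * Wt *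
        ((1 : Matrix (Fin d) (Fin d) ℂ) ⊗ₖ symProj d k) = Wt ∧
    (∀ x x' b b', W (x, b) (x', b') =
      ∑ h : {i : Fin k // (i : ℕ) ≠ 0} → Fin d,
        Wt (x, extendFirst b h) (x', extendFirst b' h))

/-- The `k`-fold tensor power of a vector in `ℂ^d`. -/
def vecPow {d : ℕ} (k : ℕ) (v : Fin d → ℂ) : (Fin k → Fin d) → ℂ :=
  fun f => ∏ i, v (f i)

end

noncomputable def Matrix.PosSemidef.sqrt {n : Type*} [Fintype n] [DecidableEq n]
    {A : Matrix n n ℂ} (h : A.PosSemidef) : Matrix n n ℂ :=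
  (h.1.eigenvectorUnitary : Matrix n n ℂ) *
    diagonal ((↑) ∘ (√·) ∘ h.1.eigenvalues) *
    (star h.1.eigenvectorUnitary : Matrix n n ℂ)

lemma Matrix.PosSemidef.posSemidef_sqrt {n : Type*} [Fintype n] [DecidableEq n]
    {A : Matrix n n ℂ} (h : A.PosSemidef) : h.sqrt.PosSemidef := by
  unfold Matrix.PosSemidef.sqrt
  refine Matrix.PosSemidef.mul_mul_conjTranspose_same ?_ _
  rw [Matrix.posSemidef_diagonal_iff]
  intro i
  exact Complex.zero_le_real.mpr (Real.sqrt_nonneg _)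

lemma Matrix.PosSemidef.sqrt_mul_self {n : Type*} [Fintype n] [DecidableEq n]
    {A : Matrix n n ℂ} (h : A.PosSemidef) : h.sqrt * h.sqrt = A := by
  have hU : (star h.1.eigenvectorUnitary : Matrix n n ℂ) *
      (h.1.eigenvectorUnitary : Matrix n n ℂ) = 1 := Unitary.coe_star_mul_self _
  conv_rhs => rw [h.1.spectral_theorem, Unitary.conjStarAlgAut_apply]
  unfold Matrix.PosSemidef.sqrt
  simp only [mul_assoc]
  rw [← mul_assoc _ (h.1.eigenvectorUnitary : Matrix n n ℂ), hU, one_mul,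
    ← mul_assoc (diagonal _) (diagonal _), diagonal_mul_diagonal]
  congr 3
  funext i
  refine (Complex.ofReal_mul _ _).symm.trans ?_
  exact congrArg Complex.ofReal (Real.mul_self_sqrt (h.eigenvalues_nonneg i))


namespace Stmt0Aux
variable {n : ℕ}

lemma msqrt_eq {A : Matrix (Fin n) (Fin n) ℂ} (hA : A.PosSemidef) : msqrt A = hA.sqrt := by
  rw [msqrt, dif_pos hA]
  rfl

lemma trace_re_nonneg {A : Matrix (Fin n) (Fin n) ℂ} (hA : A.PosSemidef) : 0 ≤ A.trace.re := by
  have h : ∀ i, 0 ≤ (A i i).re := by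
    intro i
    have h0 := hA.dotProduct_mulVec_nonneg (Pi.single i 1)
    have h1 : star (Pi.single i 1 : Fin n → ℂ) ⬝ᵥ (A *ᵥ Pi.single i 1) = A i i := by
      simp [dotProduct, Matrix.mulVec, Pi.single_apply, Finset.sum_ite_eq]
    rw [h1] at h0
    exact (Complex.le_def.mp h0).1
  rw [Matrix.trace, Complex.re_sum]
  exact Finset.sum_nonneg fun i _ => h i

lemma cs (A B : Matrix (Fin n) (Fin n) ℂ) :
    ‖(Aᴴ * B).trace‖ ≤
      Real.sqrt ((Aᴴ * A).trace.re) * Real.sqrt ((Bᴴ * B).trace.re) := by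
  classical
  let f : Matrix (Fin n) (Fin n) ℂ → EuclideanSpace ℂ (Fin n × Fin n) :=
    fun M => WithLp.toLp 2 (fun p : Fin n × Fin n => M p.1 p.2)
  have key : ∀ X Y : Matrix (Fin n) (Fin n) ℂ,
      (Xᴴ * Y).trace = inner (𝕜 := ℂ) (f X) (f Y) := by
    intro X Y
    simp only [Matrix.trace, Matrix.diag, Matrix.mul_apply, Matrix.conjTranspose_apply,
      PiLp.inner_apply, RCLike.inner_apply', f, Fintype.sum_prod_type]
    rw [Finset.sum_comm]
    rfl
  have hn : ∀ X : Matrix (Fin n) (Fin n) ℂ, Real.sqrt ((Xᴴ * X).trace.re) = ‖f X‖ := by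
    intro X
    rw [@norm_eq_sqrt_re_inner ℂ, key]
    rfl
  calc ‖(Aᴴ * B).trace‖ = ‖inner (𝕜 := ℂ) (f A) (f B)‖ := by rw [key]
    _ ≤ ‖f A‖ * ‖f B‖ := norm_inner_le_norm _ _
    _ = _ := by rw [← hn, ← hn]

lemma polar (M : Matrix (Fin n) (Fin n) ℂ) :
    ∃ W : Matrix (Fin n) (Fin n) ℂ, W ∈ Matrix.unitaryGroup (Fin n) ℂ ∧
      M = W * (Matrix.posSemidef_conjTranspose_mul_self M).sqrt := by
  classical
  have hH : (Mᴴ * M).PosSemidef := Matrix.posSemidef_conjTranspose_mul_self M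
  have hHerm := hH.1
  set V : Matrix (Fin n) (Fin n) ℂ := (hHerm.eigenvectorUnitary : Matrix (Fin n) (Fin n) ℂ)
    with hVdef
  have hVmem : V ∈ Matrix.unitaryGroup (Fin n) ℂ := (hHerm.eigenvectorUnitary).2
  have hVsV : Vᴴ * V = 1 := by
    rw [← Matrix.star_eq_conjTranspose]
    exact (Matrix.mem_unitaryGroup_iff'.mp hVmem)
  have hVVs : V * Vᴴ = 1 := by
    rw [← Matrix.star_eq_conjTranspose]
    exact (Matrix.mem_unitaryGroup_iff.mp hVmem)
  set d : Fin n → ℝ := hHerm.eigenvalues with hddef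
  have hd : ∀ i, 0 ≤ d i := hH.eigenvalues_nonneg
  set s : Fin n → ℝ := fun i => Real.sqrt (d i) with hsdef
  have hs2 : ∀ i, (s i) * (s i) = d i := fun i => Real.mul_self_sqrt (hd i)
  set N : Matrix (Fin n) (Fin n) ℂ := M * V with hNdef
  have hNN : Nᴴ * N = Matrix.diagonal (fun i => (d i : ℂ)) := by
    have hspec : star V * (Mᴴ * M) * V =
        Matrix.diagonal (RCLike.ofReal ∘ hHerm.eigenvalues) := by
      have := hHerm.conjStarAlgAut_star_eigenvectorUnitary
      rw [Unitary.conjStarAlgAut_star_apply] at this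
      exact this
    rw [Matrix.star_eq_conjTranspose] at hspec
    calc Nᴴ * N = Vᴴ * (Mᴴ * M) * V := by
          rw [hNdef, Matrix.conjTranspose_mul]
          noncomm_ring
      _ = Matrix.diagonal (fun i => (d i : ℂ)) := by
          rw [hspec]; rfl
  have hNNentry : ∀ i i', ∑ j, (starRingEnd ℂ) (N j i) * N j i' =
      (if i = i' then (d i : ℂ) else 0) := by
    intro i i'
    have := congrFun (congrFun hNN i) i'
    simpa [Matrix.mul_apply, Matrix.conjTranspose_apply, Matrix.diagonal_apply] using this
  -- columns with zero singular value vanish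
  have hNzero : ∀ i, d i = 0 → ∀ j, N j i = 0 := by
    intro i hi j
    have h0c : (∑ j, ((Complex.normSq (N j i) : ℂ))) = 0 := by
      calc (∑ j, ((Complex.normSq (N j i) : ℂ))) = ∑ j, (starRingEnd ℂ) (N j i) * N j i :=
            Finset.sum_congr rfl fun j _ => by rw [Complex.normSq_eq_conj_mul_self]
        _ = 0 := by rw [hNNentry i i, if_pos rfl, hi]; simp
    have h0 : ∑ j, Complex.normSq (N j i) = 0 := by exact_mod_cast h0c
    have := (Finset.sum_eq_zero_iff_of_nonneg
      (fun j _ => Complex.normSq_nonneg (N j i))).mp h0 j (Finset.mem_univ j)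
    exact Complex.normSq_eq_zero.mp this
  -- the normalized columns
  set v : Fin n → EuclideanSpace ℂ (Fin n) :=
    fun i => WithLp.toLp 2 (fun j => ((s i : ℂ))⁻¹ * N j i) with hvdef
  have horth : Orthonormal ℂ (Set.restrict {i | d i ≠ 0} v) := by
    rw [orthonormal_iff_ite]
    rintro ⟨i, hi⟩ ⟨i', hi'⟩
    have : (inner (𝕜 := ℂ) (v i) (v i')) =
        ((s i : ℂ))⁻¹ * ((s i' : ℂ))⁻¹ * (if i = i' then (d i : ℂ) else 0) := by
      rw [← hNNentry i i']
      simp only [PiLp.inner_apply, RCLike.inner_apply', hvdef, _root_.map_mul, Finset.mul_sum]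
      refine Finset.sum_congr rfl fun j _ => by
        rw [map_inv₀, Complex.conj_ofReal]
        ring
    change inner ℂ (v i) (v i') = _
    rw [this]
    by_cases h : i = i'
    · subst h
      simp only [if_pos rfl, Subtype.mk.injEq]
      have hsne : (s i : ℂ) ≠ 0 := by
        simpa [hsdef, Complex.ofReal_eq_zero, Real.sqrt_eq_zero (hd i)] using hi
      field_simp
      rw [if_pos trivial, if_pos trivial, mul_one, sq, ← Complex.ofReal_mul, hs2 i]
    · have h' : (⟨i, hi⟩ : {i | d i ≠ 0}) ≠ ⟨i', hi'⟩ := by simpa using h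
      rw [if_neg h, if_neg h']
      ring
  obtain ⟨b, hb⟩ := horth.exists_orthonormalBasis_extension_of_card_eq
    (by simp) 
  set Q : Matrix (Fin n) (Fin n) ℂ := Matrix.of (fun j i => b i j) with hQdef
  have hQmem : Q ∈ Matrix.unitaryGroup (Fin n) ℂ := by
    rw [Matrix.mem_unitaryGroup_iff', Matrix.star_eq_conjTranspose]
    ext i i'
    have := orthonormal_iff_ite.mp b.orthonormal i i'
    simpa [Matrix.mul_apply, Matrix.conjTranspose_apply, hQdef, Matrix.one_apply,
      PiLp.inner_apply, RCLike.inner_apply', mul_comm] using this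
  have hQD : Q * Matrix.diagonal (fun i => (s i : ℂ)) = N := by
    ext j i
    rw [Matrix.mul_apply]
    simp only [Matrix.diagonal_apply, mul_ite, mul_zero, Finset.sum_ite_eq',
      Finset.mem_univ, if_true]
    by_cases hi : d i = 0
    · have : s i = 0 := by simp [hsdef, hi]
      rw [this, hNzero i hi j]
      simp
    · have hbv : b i = v i := hb i hi
      have hsne : (s i : ℂ) ≠ 0 := by
        simpa [hsdef, Complex.ofReal_eq_zero, Real.sqrt_eq_zero (hd i)] using hi
      rw [hQdef]
      show (b i) j * (s i : ℂ) = N j i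
      rw [hbv]
      show ((s i : ℂ))⁻¹ * N j i * (s i : ℂ) = N j i
      field_simp
  have hP : hH.sqrt = V * Matrix.diagonal (fun i => (s i : ℂ)) * Vᴴ := rfl
  refine ⟨Q * Vᴴ, ?_, ?_⟩
  · exact mul_mem hQmem (by rw [← Matrix.star_eq_conjTranspose]; exact Unitary.star_mem hVmem)
  · rw [hP]
    calc M = M * (V * Vᴴ) := by rw [hVVs, Matrix.mul_one]
      _ = N * Vᴴ := by rw [hNdef, Matrix.mul_assoc]
      _ = Q * Matrix.diagonal (fun i => (s i : ℂ)) * Vᴴ := by rw [hQD]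
      _ = Q * Vᴴ * (V * Matrix.diagonal (fun i => (s i : ℂ)) * Vᴴ) := by
          simp only [Matrix.mul_assoc]
          rw [← Matrix.mul_assoc Vᴴ V, hVsV, Matrix.one_mul]

/-- The trace norm, via `msqrt`. -/
noncomputable def tn (M : Matrix (Fin n) (Fin n) ℂ) : ℝ := ((msqrt (Mᴴ * M)).trace).re

lemma tn_eq (M : Matrix (Fin n) (Fin n) ℂ) :
    tn M = ((Matrix.posSemidef_conjTranspose_mul_self M).sqrt.trace).re := by
  rw [tn, msqrt_eq (Matrix.posSemidef_conjTranspose_mul_self M)]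

/-- K1: the trace norm is attained as `Re Tr(M W)` for some unitary `W`. -/
lemma exists_unitary_tn (M : Matrix (Fin n) (Fin n) ℂ) :
    ∃ W ∈ Matrix.unitaryGroup (Fin n) ℂ, ((M * W).trace).re = tn M := by
  obtain ⟨W, hWmem, hMW⟩ := polar M
  set P := (Matrix.posSemidef_conjTranspose_mul_self M).sqrt with hPdef
  refine ⟨star W, Unitary.star_mem hWmem, ?_⟩
  have : M * star W = W * P * star W := by rw [← hMW]
  rw [this, tn_eq, Matrix.trace_mul_cycle,
    Matrix.mem_unitaryGroup_iff'.mp hWmem, Matrix.one_mul]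

/-- K2: `Re Tr(M U) ≤ ‖M‖₁` for every unitary `U`. -/
lemma re_trace_le_tn (M : Matrix (Fin n) (Fin n) ℂ) {U : Matrix (Fin n) (Fin n) ℂ}
    (hU : U ∈ Matrix.unitaryGroup (Fin n) ℂ) : ((M * U).trace).re ≤ tn M := by
  obtain ⟨W, hWmem, hMW⟩ := polar M
  have hP := (Matrix.posSemidef_conjTranspose_mul_self M).posSemidef_sqrt
  set P := (Matrix.posSemidef_conjTranspose_mul_self M).sqrt with hPdef
  set R := hP.sqrt with hRdef
  have hRR : R * R = P := hP.sqrt_mul_self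
  have hRH : Rᴴ = R := hP.posSemidef_sqrt.1
  have hUU : U * Uᴴ = 1 := by
    rw [← Matrix.star_eq_conjTranspose]; exact Matrix.mem_unitaryGroup_iff.mp hU
  have hWW : W * Wᴴ = 1 := by
    rw [← Matrix.star_eq_conjTranspose]; exact Matrix.mem_unitaryGroup_iff.mp hWmem
  have htr : (M * U).trace = (Rᴴ * (R * U * W)).trace := by
    rw [hMW, ← hRR, hRH]
    rw [show W * (R * R) * U = (W * R) * (R * U) by noncomm_ring, Matrix.trace_mul_comm,
      show (R * U) * (W * R) = (R * U * W) * R by noncomm_ring, Matrix.trace_mul_comm]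
  have hcs := cs R (R * U * W)
  have h1 : (Rᴴ * R).trace = P.trace := by rw [hRH, hRR]
  have h2 : ((R * U * W)ᴴ * (R * U * W)).trace = P.trace := by
    rw [Matrix.conjTranspose_mul, Matrix.conjTranspose_mul, hRH]
    rw [show Wᴴ * (Uᴴ * R) * (R * U * W) = Wᴴ * (Uᴴ * ((R * R) * (U * W))) by noncomm_ring,
      hRR, Matrix.trace_mul_comm]
    rw [show Uᴴ * (P * (U * W)) * Wᴴ = Uᴴ * (P * (U * (W * Wᴴ))) by noncomm_ring, hWW,
      Matrix.mul_one, Matrix.trace_mul_comm,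
      show P * U * Uᴴ = P * (U * Uᴴ) by noncomm_ring, hUU, Matrix.mul_one]
  calc ((M * U).trace).re ≤ ‖(M * U).trace‖ := Complex.re_le_norm _
    _ = ‖(Rᴴ * (R * U * W)).trace‖ := by rw [htr]
    _ ≤ Real.sqrt ((Rᴴ * R).trace.re) * Real.sqrt (((R * U * W)ᴴ * (R * U * W)).trace.re) := hcs
    _ = Real.sqrt (P.trace.re) * Real.sqrt (P.trace.re) := by rw [h1, h2]
    _ = P.trace.re := Real.mul_self_sqrt (trace_re_nonneg hP)
    _ = tn M := (tn_eq M).symm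

lemma fid_eq_tn {ρ σ : Matrix (Fin n) (Fin n) ℂ} (hρ : ρ.PosSemidef) (hσ : σ.PosSemidef) :
    Fid ρ σ = tn (msqrt σ * msqrt ρ) := by
  have ha : msqrt ρ = hρ.sqrt := msqrt_eq hρ
  have hs : msqrt σ = hσ.sqrt := msqrt_eq hσ
  have key : (msqrt σ * msqrt ρ)ᴴ * (msqrt σ * msqrt ρ) = msqrt ρ * σ * msqrt ρ := by
    rw [Matrix.conjTranspose_mul, ha, hs, hρ.posSemidef_sqrt.1, hσ.posSemidef_sqrt.1]
    rw [show hρ.sqrt * hσ.sqrt * (hσ.sqrt * hρ.sqrt)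
        = hρ.sqrt * (hσ.sqrt * hσ.sqrt) * hρ.sqrt by noncomm_ring, hσ.sqrt_mul_self]
  rw [Fid, tn, key]

end Stmt0Aux

open Stmt0Aux

/-- For density matrices ρ, σ, τ on ℂⁿ,
`|F(ρ,σ) − F(τ,σ)| ≤ √2 · √(1 − F(τ,ρ))`. -/
theorem stmt0 {n : ℕ} (ρ σ τ : Matrix (Fin n) (Fin n) ℂ)
    (hρ : IsDensityMatrix ρ) (hσ : IsDensityMatrix σ) (hτ : IsDensityMatrix τ) :
    |Fid ρ σ - Fid τ σ| ≤ Real.sqrt 2 * Real.sqrt (1 - Fid τ ρ) := by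
  obtain ⟨hρp, hρt⟩ := hρ
  obtain ⟨hσp, hσt⟩ := hσ
  obtain ⟨hτp, hτt⟩ := hτ
  set a := msqrt ρ with hadef
  set t := msqrt τ with htdef
  set s := msqrt σ with hsdef
  have haH : aᴴ = a := by rw [hadef, msqrt_eq hρp]; exact hρp.posSemidef_sqrt.1
  have htH : tᴴ = t := by rw [htdef, msqrt_eq hτp]; exact hτp.posSemidef_sqrt.1
  have hsH : sᴴ = s := by rw [hsdef, msqrt_eq hσp]; exact hσp.posSemidef_sqrt.1
  have haa : a * a = ρ := by rw [hadef, msqrt_eq hρp]; exact hρp.sqrt_mul_self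
  have htt : t * t = τ := by rw [htdef, msqrt_eq hτp]; exact hτp.sqrt_mul_self
  have hss : s * s = σ := by rw [hsdef, msqrt_eq hσp]; exact hσp.sqrt_mul_self
  have hFtr : Fid τ ρ = tn (a * t) := fid_eq_tn hτp hρp
  obtain ⟨W, hWmem, hW⟩ := exists_unitary_tn (a * t)
  rw [← hFtr] at hW
  have hWWs : W * Wᴴ = 1 := by
    rw [← Matrix.star_eq_conjTranspose]; exact Matrix.mem_unitaryGroup_iff.mp hWmem
  set B := t * W with hBdef
  -- the squared Bures-type distance
  have hD : ((a - B)ᴴ * (a - B)).trace.re = 2 - 2 * Fid τ ρ := by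
    have h1 : (a - B)ᴴ = a - Wᴴ * t := by
      rw [hBdef, Matrix.conjTranspose_sub, haH, Matrix.conjTranspose_mul, htH]
    have hexp : (a - B)ᴴ * (a - B) =
        ρ - a * t * W - Wᴴ * (t * a) + Wᴴ * τ * W := by
      rw [h1, hBdef, ← haa, ← htt]; noncomm_ring
    have h2 : (Wᴴ * (t * a)).trace = star ((a * t * W).trace) := by
      rw [← Matrix.trace_conjTranspose]
      congr 1
      rw [Matrix.conjTranspose_mul, Matrix.conjTranspose_mul, htH, haH]
    have h3 : (Wᴴ * τ * W).trace = τ.trace := by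
      rw [Matrix.trace_mul_cycle]
      rw [show W * Wᴴ * τ = (W * Wᴴ) * τ from rfl, hWWs, Matrix.one_mul]
    rw [hexp, Matrix.trace_add, Matrix.trace_sub, Matrix.trace_sub, h2, h3, hρt, hτt]
    simp only [Complex.add_re, Complex.sub_re, Complex.one_re, Complex.star_def,
      Complex.conj_re]
    rw [hW]
    ring
  -- the uniform bound
  have hbound : ∀ V ∈ Matrix.unitaryGroup (Fin n) ℂ,
      ‖(s * ((a - B) * V)).trace‖ ≤ Real.sqrt 2 * Real.sqrt (1 - Fid τ ρ) := by
    intro V hV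
    have hVVs : V * Vᴴ = 1 := by
      rw [← Matrix.star_eq_conjTranspose]; exact Matrix.mem_unitaryGroup_iff.mp hV
    have hcs := cs s ((a - B) * V)
    rw [hsH, hss, hσt] at hcs
    have hVtr : (((a - B) * V)ᴴ * ((a - B) * V)).trace = ((a - B)ᴴ * (a - B)).trace := by
      rw [Matrix.conjTranspose_mul]
      rw [show Vᴴ * (a - B)ᴴ * ((a - B) * V) = Vᴴ * ((a - B)ᴴ * (a - B)) * V by noncomm_ring,
        Matrix.trace_mul_cycle,
        show V * Vᴴ * ((a - B)ᴴ * (a - B)) = (V * Vᴴ) * ((a - B)ᴴ * (a - B)) from rfl,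
        hVVs, Matrix.one_mul]
    rw [hVtr] at hcs
    calc ‖(s * ((a - B) * V)).trace‖
        ≤ Real.sqrt ((1 : ℂ).re) * Real.sqrt (((a - B)ᴴ * (a - B)).trace.re) := hcs
      _ = Real.sqrt (2 - 2 * Fid τ ρ) := by
          rw [hD, Complex.one_re, Real.sqrt_one, one_mul]
      _ = Real.sqrt 2 * Real.sqrt (1 - Fid τ ρ) := by
          rw [show 2 - 2 * Fid τ ρ = 2 * (1 - Fid τ ρ) by ring,
            Real.sqrt_mul (by norm_num : (0:ℝ) ≤ 2)]
  have hFρσ : Fid ρ σ = tn (s * a) := fid_eq_tn hρp hσp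
  have hFτσ : Fid τ σ = tn (s * t) := fid_eq_tn hτp hσp
  rw [abs_sub_le_iff]
  constructor
  · -- direction 1
    obtain ⟨U, hUmem, hU⟩ := exists_unitary_tn (s * a)
    have k2 : ((s * t) * (W * U)).trace.re ≤ tn (s * t) :=
      re_trace_le_tn _ (mul_mem hWmem hUmem)
    have e1 : s * ((a - B) * U) = (s * a) * U - (s * t) * (W * U) := by
      rw [hBdef]; noncomm_ring
    calc Fid ρ σ - Fid τ σ ≤ ((s * a) * U).trace.re - ((s * t) * (W * U)).trace.re := by
          rw [hFρσ, hFτσ, ← hU]; linarith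
      _ = (s * ((a - B) * U)).trace.re := by
          rw [e1, Matrix.trace_sub, Complex.sub_re]
      _ ≤ ‖(s * ((a - B) * U)).trace‖ := Complex.re_le_norm _
      _ ≤ Real.sqrt 2 * Real.sqrt (1 - Fid τ ρ) := hbound U hUmem
  · -- direction 2
    obtain ⟨U₂, hU2mem, hU2⟩ := exists_unitary_tn (s * t)
    have hV'mem : star W * U₂ ∈ Matrix.unitaryGroup (Fin n) ℂ :=
      mul_mem (Unitary.star_mem hWmem) hU2mem
    have k2' : ((s * a) * (star W * U₂)).trace.re ≤ tn (s * a) := re_trace_le_tn _ hV'mem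
    have e2 : s * ((a - B) * (star W * U₂)) = (s * a) * (star W * U₂) - (s * t) * U₂ := by
      rw [hBdef, Matrix.star_eq_conjTranspose]
      rw [show s * ((a - t * W) * (Wᴴ * U₂))
          = s * a * (Wᴴ * U₂) - s * (t * (W * Wᴴ)) * U₂ by noncomm_ring, hWWs]
      noncomm_ring
    calc Fid τ σ - Fid ρ σ ≤ ((s * t) * U₂).trace.re - ((s * a) * (star W * U₂)).trace.re := by
          rw [hFρσ, hFτσ, ← hU2]; linarith
      _ = -((s * ((a - B) * (star W * U₂))).trace.re) := by
          rw [e2, Matrix.trace_sub, Complex.sub_re]; ring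
      _ ≤ ‖(s * ((a - B) * (star W * U₂))).trace‖ := by
          refine le_trans (neg_le_abs _) ?_
          exact Complex.abs_re_le_norm _
      _ ≤ Real.sqrt 2 * Real.sqrt (1 - Fid τ ρ) := hbound _ hV'mem
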